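/- arXiv:2110.15519 — 4 statements merged into one kernel-verified Lean document; each statement's English description precedes it below -/
import Mathlib

section
/- Let H be a multigraph with at least 3 edges and let G = L(H) be its line graph. Then G is hamiltonian if and only if H has a dominating closed trail, i.e., a closed trail T such that every edge of H has at least one endpoint in V(T). -/
/-- A multigraph on vertex type `V` with edge type `E`: each edge is assigned an
unordered pair of endpoints (possibly equal, for loops). -/
structure Multigraph (V : Type*) (E : Type*) where
  inc : E → Sym2 V

namespace Multigraph

open scoped Classical

variable {V E : Type*} {M : Multigraph V E}

/-- Walks in a multigraph. -/
inductive Walk (M : Multigraph V E) : V → V → Type _ where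
  | nil (v : V) : Walk M v v
  | cons {u v w : V} (e : E) (h : M.inc e = s(u, v)) (p : Walk M v w) : Walk M u w

/-- The list of edges of a walk. -/
def Walk.edges : ∀ {u v : V}, M.Walk u v → List E
  | _, _, .nil _ => []
  | _, _, .cons e _ p => e :: p.edges

/-- The list of vertices visited by a walk, in order. -/
def Walk.support : ∀ {u v : V}, M.Walk u v → List V
  | _, v, .nil _ => [v]
  | u, _, .cons _ _ p => u :: p.support

/-- A trail is a walk with no repeated edge. -/
def Walk.IsTrail {u v : V} (p : M.Walk u v) : Prop := p.edges.Nodup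

/-- The interior vertices of a walk (all vertices except the two ends). -/
def Walk.interior {u v : V} (p : M.Walk u v) : List V := p.support.tail.dropLast

/-- Two vertices are reachable if joined by a walk. -/
def Reachable (M : Multigraph V E) (u v : V) : Prop := Nonempty (M.Walk u v)

/-- Reachability avoiding a set `R` of edges. -/
def ReachableOff (M : Multigraph V E) (R : Set E) (u v : V) : Prop :=
  ∃ p : M.Walk u v, ∀ e ∈ p.edges, e ∉ R

/-- A multigraph is connected if every two vertices are joined by a walk. -/
def Connected (M : Multigraph V E) : Prop := ∀ u v : V, M.Reachable u v

/-- A multigraph is `k`-edge-connected if it stays connected after the removal of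
any set of fewer than `k` edges. -/
def KEdgeConnected (M : Multigraph V E) (k : ℕ) : Prop :=
  ∀ R : Finset E, R.card < k → ∀ u v : V, M.ReachableOff (↑R) u v

/-- An edge-cut `R` is essential if after its removal two remaining edges lie in
different components. -/
def IsEssentialCut (M : Multigraph V E) (R : Finset E) : Prop :=
  ∃ (e f : E) (u v : V), e ∉ R ∧ f ∉ R ∧ u ∈ M.inc e ∧ v ∈ M.inc f ∧
    ¬ M.ReachableOff (↑R) u v

/-- A multigraph is essentially `k`-edge-connected if every essential edge-cut has
size at least `k`. -/
def EssentiallyKEdgeConnected (M : Multigraph V E) (k : ℕ) : Prop :=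
  ∀ R : Finset E, M.IsEssentialCut R → k ≤ R.card

/-- The line graph of a multigraph: vertices are the edges, adjacent when sharing
an endpoint. -/
def lineGraph (M : Multigraph V E) : SimpleGraph E where
  Adj e f := e ≠ f ∧ ∃ v : V, v ∈ M.inc e ∧ v ∈ M.inc f
  symm := by
    constructor
    rintro e f ⟨hne, v, hv1, hv2⟩
    exact ⟨hne.symm, v, hv2, hv1⟩
  loopless := by constructor; rintro e ⟨hne, -⟩; exact hne rfl

/-- The degree of a vertex: the number of edge-ends at it (loops count twice). -/
noncomputable def degree (M : Multigraph V E) [Fintype E] (v : V) : ℕ :=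
  ∑ e : E, Sym2.lift ⟨fun a b => (if a = v then 1 else 0) + (if b = v then 1 else 0),
    fun a b => by ring⟩ (M.inc e)

/-- A pendant edge: an edge with an endpoint of degree `1`. -/
def IsPendant (M : Multigraph V E) [Fintype E] (e : E) : Prop :=
  ∃ v : V, v ∈ M.inc e ∧ M.degree v = 1

/-- A closed trail whose vertex set dominates every edge. -/
def HasDominatingClosedTrail (M : Multigraph V E) : Prop :=
  ∃ (v : V) (p : M.Walk v v), p.IsTrail ∧
    ∀ e : E, ∃ x : V, x ∈ M.inc e ∧ x ∈ p.support

/-- A closed trail through every vertex. -/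
def HasSpanningClosedTrail (M : Multigraph V E) : Prop :=
  ∃ (v : V) (p : M.Walk v v), p.IsTrail ∧ ∀ x : V, x ∈ p.support

/-- An internally dominating `(e₁,e₂)`-trail: a trail with first edge `e₁` and last
edge `e₂` whose interior vertices dominate every edge. -/
def HasIDT (M : Multigraph V E) (e₁ e₂ : E) : Prop :=
  ∃ (u v : V) (p : M.Walk u v), p.IsTrail ∧
    p.edges.head? = some e₁ ∧ p.edges.getLast? = some e₂ ∧
    ∀ e : E, ∃ x : V, x ∈ M.inc e ∧ x ∈ p.interior

end Multigraph

/-! A Hamiltonian cycle of `L(H)` is a cyclic ordering of `E(H)` in which consecutive edges meet.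
Walking through the common endpoints of consecutive edges, and skipping an edge whenever two
consecutive common endpoints coincide, gives a closed trail that has an endpoint of every edge
among its vertices. Conversely, along a dominating closed trail every edge off the trail can be
inserted next to a trail edge at a trail vertex it contains; the resulting cyclic ordering of all
edges is a Hamiltonian cycle of `L(H)` as soon as there are at least three edges. -/

theorem List.IsChain.and {α : Type*} {R S : α → α → Prop} {l : List α} (hR : l.IsChain R)
    (hS : l.IsChain S) : l.IsChain fun a b => R a b ∧ S a b := by
  rw [List.isChain_iff_getElem] at hR hS ⊢
  exact fun i h => ⟨hR i h, hS i h⟩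

namespace SimpleGraph

variable {α : Type*} [Fintype α] [DecidableEq α] {G : SimpleGraph α}

theorem Walk.isHamiltonianCycle_of_support_tail {a : α} (c : G.Walk a a)
    (hcard : 3 ≤ Fintype.card α) (hnd : c.support.tail.Nodup)
    (hall : ∀ b, b ∈ c.support.tail) : c.IsHamiltonianCycle := by
  have hnil : ¬ c.Nil := fun h => by simpa [h.eq_nil] using hall a
  have htail : c.tail.IsHamiltonian := by
    refine IsPath.isHamiltonian_of_mem (IsPath.mk' ?_) fun b => ?_ <;>
      rw [support_tail_of_not_nil c hnil]
    exacts [hnd, hall b]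
  refine isHamiltonianCycle_isCycle_and_isHamiltonian_tail.2
    ⟨isCycle_iff_isPath_tail_and_le_length.2 ⟨htail.isPath, ?_⟩, htail⟩
  rw [← length_tail_add_one hnil, htail.length_eq]
  omega

theorem isHamiltonian_of_isChain (hcard : 3 ≤ Fintype.card α) {a : α} {l : List α}
    (hnd : (l ++ [a]).Nodup) (hall : ∀ b, b ∈ l ++ [a])
    (hchain : (a :: (l ++ [a])).IsChain G.Adj) : G.IsHamiltonian := by
  intro _
  let c : G.Walk a a := (Walk.ofSupport _ (List.cons_ne_nil _ _) hchain).copy rfl (by simp)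
  have hc : c.support = a :: (l ++ [a]) :=
    (Walk.support_copy _ _ _).trans (Walk.support_ofSupport _ _)
  refine ⟨a, c, c.isHamiltonianCycle_of_support_tail hcard ?_ ?_⟩ <;> rw [hc]
  exacts [hnd, hall]

end SimpleGraph

namespace Multigraph

variable {V E : Type*} {M : Multigraph V E}

def Meet (M : Multigraph V E) (e f : E) : Prop := ∃ x, x ∈ M.inc e ∧ x ∈ M.inc f

def Dominates (M : Multigraph V E) (s : List V) (e : E) : Prop := ∃ x, x ∈ M.inc e ∧ x ∈ s

theorem Walk.start_mem_support {u v : V} (p : M.Walk u v) : u ∈ p.support := by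
  cases p <;> simp [Walk.support]

theorem Walk.eq_of_edges_eq_nil {u v : V} (p : M.Walk u v) (h : p.edges = []) : u = v := by
  cases p with
  | nil => rfl
  | cons => simp [Walk.edges] at h

theorem Walk.exists_cons_of_mem_inc {e : E} {x y z : V} (hx : x ∈ M.inc e) (hz : z ∈ M.inc e)
    (q : M.Walk z y) :
    ∃ p : M.Walk x y,
      p.edges.Sublist (e :: q.edges) ∧ x ∈ p.support ∧ q.support ⊆ p.support := by
  by_cases hxz : x = z
  · subst hxz
    exact ⟨q, List.sublist_cons_self _ _, q.start_mem_support, List.Subset.refl _⟩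
  · refine ⟨.cons e ((Sym2.mem_and_mem_iff hxz).1 ⟨hx, hz⟩) q, ?_, ?_, ?_⟩ <;>
      simp [Walk.edges, Walk.support]

theorem exists_walk_of_lineGraph_walk {e f : E} (q : M.lineGraph.Walk e f) {x y : V}
    (hx : x ∈ M.inc e) (hy : y ∈ M.inc f) :
    ∃ p : M.Walk x y,
      p.edges.Sublist q.support ∧ ∀ g ∈ q.support, M.Dominates p.support g := by
  induction q generalizing x with
  | nil =>
    obtain ⟨p, hsub, hxp, -⟩ := Walk.exists_cons_of_mem_inc hx hy (.nil y)
    exact ⟨p, by simpa [Walk.edges] using hsub, by simpa using ⟨x, hx, hxp⟩⟩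
  | @cons e e' f hadj q ih =>
    obtain ⟨z, hze, hze'⟩ := hadj.2
    obtain ⟨p', hsub', hdom'⟩ := ih hze' hy
    obtain ⟨p, hsub, hxp, hp'p⟩ := Walk.exists_cons_of_mem_inc hx hze p'
    refine ⟨p, hsub.trans (hsub'.cons_cons e), ?_⟩
    simp only [SimpleGraph.Walk.support_cons, List.forall_mem_cons]
    exact ⟨⟨x, hx, hxp⟩, fun g hg => (hdom' g hg).imp fun w hw => ⟨hw.1, hp'p hw.2⟩⟩

theorem hasDominatingClosedTrail_of_isHamiltonianCycle [DecidableEq E] {a : E}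
    {c : M.lineGraph.Walk a a} (hc : c.IsHamiltonianCycle) : M.HasDominatingClosedTrail := by
  have hnil := hc.isCycle.not_nil
  obtain ⟨x, hxa, hxs⟩ := (c.adj_snd hnil).2
  obtain ⟨p, hsub, hdom⟩ := exists_walk_of_lineGraph_walk c.tail hxs hxa
  exact ⟨x, p, hc.isCycle.isPath_tail.support_nodup.sublist hsub,
    fun g => hdom g (hc.isHamiltonian_tail.mem_support g)⟩

theorem isChain_meet_of_forall_mem {x : V} {S : List E} (h : ∀ f ∈ S, x ∈ M.inc f) :
    S.IsChain M.Meet :=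
  List.Pairwise.isChain (List.pairwise_of_forall_mem_list fun a ha b hb => ⟨x, h a ha, h b hb⟩)

open scoped List in
theorem Walk.exists_perm_isChain_meet {u w : V} (p : M.Walk u w) (S : List E)
    (hS : ∀ f ∈ S, M.Dominates p.support f) :
    ∃ O : List E, O ~ p.edges ++ S ∧ O.IsChain M.Meet ∧
      (∀ e ∈ O.head?, u ∈ M.inc e) ∧ (∀ e ∈ O.getLast?, w ∈ M.inc e) := by
  classical
  induction p generalizing S with
  | nil v =>
    have hv : ∀ f ∈ S, v ∈ M.inc f := fun f hf => by
      obtain ⟨x, hx, hxv⟩ := hS f hf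
      rwa [List.mem_singleton.1 hxv] at hx
    exact ⟨S, by simp [Walk.edges], isChain_meet_of_forall_mem hv,
      fun f hf => hv f (List.mem_of_mem_head? hf), fun f hf => hv f (List.mem_of_getLast? hf)⟩
  | @cons u v w e h q ih =>
    -- the edges of `S` at `u` go in front of `e`, the others are handled along `q`
    set S₁ := S.filter (u ∈ M.inc ·)
    set S₂ := S.filter (fun f => !decide (u ∈ M.inc f))
    have hS₁ : ∀ f ∈ S₁, u ∈ M.inc f := fun f hf => by simpa using List.of_mem_filter hf
    have hS₂ : ∀ f ∈ S₂, M.Dominates q.support f := by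
      intro f hf
      obtain ⟨hfS, hfu⟩ := List.mem_filter.1 hf
      simp only [Bool.not_eq_true', decide_eq_false_iff_not] at hfu
      obtain ⟨x, hx, hxp⟩ := hS f hfS
      rcases List.mem_cons.1 hxp with rfl | hxq
      · simp_all
      · exact ⟨x, hx, hxq⟩
    obtain ⟨O, hperm, hchain, hhd, hlast⟩ := ih S₂ hS₂
    have hue : u ∈ M.inc e := by simp [h]
    have hve : v ∈ M.inc e := by simp [h]
    refine ⟨S₁ ++ e :: O, ?_, ?_, ?_, ?_⟩
    · have hsplit : S₁ ++ S₂ ~ S := List.filter_append_perm _ S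
      calc S₁ ++ e :: O ~ S₁ ++ e :: (q.edges ++ S₂) := (hperm.cons e).append_left S₁
        _ ~ e :: q.edges ++ (S₁ ++ S₂) :=
          List.perm_middle.trans ((List.perm_append_comm_assoc _ _ _).cons e)
        _ ~ e :: q.edges ++ S := hsplit.append_left _
    · refine (isChain_meet_of_forall_mem hS₁).append
        (List.isChain_cons.2 ⟨fun f hf => ⟨v, hve, hhd f hf⟩, hchain⟩) ?_
      rintro f hf _ ⟨⟩
      exact ⟨u, hS₁ f (List.mem_of_getLast? hf), hue⟩
    · cases hc : S₁ with
      | nil => simpa using hue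
      | cons f _ => simpa using hS₁ f (by simp [hc])
    · rw [List.getLast?_append_of_ne_nil _ (List.cons_ne_nil _ _)]
      cases O with
      | nil =>
        have : q.edges = [] := (List.append_eq_nil_iff.1 hperm.symm.eq_nil).1
        simpa [← q.eq_of_edges_eq_nil this] using hve
      | cons f O => simpa [List.getLast?_cons_cons] using hlast

open scoped List in
theorem lineGraph_isHamiltonian_of_isChain_meet [Fintype E] [DecidableEq E]
    (hcard : 3 ≤ Fintype.card E) {v : V} {O : List E} (hO : O ~ Finset.univ.toList)
    (hchain : O.IsChain M.Meet) (hhd : ∀ e ∈ O.head?, v ∈ M.inc e)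
    (hlast : ∀ e ∈ O.getLast?, v ∈ M.inc e) : M.lineGraph.IsHamiltonian := by
  have hlen : O.length = Fintype.card E := by
    rw [hO.length_eq, Finset.length_toList, Finset.card_univ]
  obtain ⟨e, l, rfl⟩ := List.exists_cons_of_length_pos (show 0 < O.length by omega)
  have hl : l ≠ [] := by rintro rfl; simp at hlen; omega
  have hnd : (e :: l).Nodup := hO.nodup_iff.2 (Finset.nodup_toList _)
  have hrot : l ++ [e] ~ e :: l := List.perm_append_singleton e l
  have hne : (e :: (l ++ [e])).IsChain (· ≠ ·) := by
    refine List.isChain_cons.2 ⟨fun f hf => ?_, (hrot.nodup_iff.2 hnd).isChain⟩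
    rw [List.head?_append_of_ne_nil _ hl] at hf
    exact fun hef => (List.nodup_cons.1 hnd).1 (hef ▸ List.mem_of_mem_head? hf)
  have hmeet : (e :: (l ++ [e])).IsChain M.Meet := by
    refine hchain.append (List.isChain_singleton e) ?_
    rintro f hf _ ⟨⟩
    exact ⟨v, hlast f hf, hhd e rfl⟩
  exact SimpleGraph.isHamiltonian_of_isChain hcard (hrot.nodup_iff.2 hnd)
    (fun f => hrot.mem_iff.2 (hO.mem_iff.2 (Finset.mem_toList.2 (Finset.mem_univ f))))
    (hne.and hmeet)

end Multigraph

/-- For a multigraph `H` with at least `3` edges, the line graph `L(H)` is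
hamiltonian if and only if `H` has a dominating closed trail. -/
theorem stmt4 {V E : Type*} [Fintype E] [DecidableEq E] (M : Multigraph V E)
    (hE : 3 ≤ Fintype.card E) :
    (M.lineGraph).IsHamiltonian ↔ M.HasDominatingClosedTrail := by
  constructor
  · intro hham
    obtain ⟨a, c, hc⟩ := hham (by omega)
    exact M.hasDominatingClosedTrail_of_isHamiltonianCycle hc
  · rintro ⟨v, p, htrail, hdom⟩
    obtain ⟨S, hS⟩ : ∃ S, Finset.univ.toList.Perm (p.edges ++ S) := by
      obtain ⟨L, hL, hsub⟩ :=
        List.subperm_of_subset htrail fun e _ => Finset.mem_toList.2 (Finset.mem_univ e)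
      obtain ⟨S, hS⟩ := hsub.exists_perm_append
      exact ⟨S, hS.trans (hL.append_right S)⟩
    obtain ⟨O, hperm, hchain, hhd, hlast⟩ := p.exists_perm_isChain_meet S fun f _ => hdom f
    exact M.lineGraph_isHamiltonian_of_isChain_meet hE (hperm.trans hS.symm) hchain hhd hlast
end

section
/- Let H be an essentially 3-edge-connected multigraph. If the core co(H) has a spanning closed trail, then H has a dominating closed trail. -/
namespace Multigraph

open scoped Classical

variable {V E VK EK : Type*}

/-- The number of ends of the edge `e` at the vertex `v`. -/
noncomputable def endCount (M : Multigraph V E) (v : V) (e : E) : ℕ :=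
  Sym2.lift ⟨fun a b => (if a = v then 1 else 0) + (if b = v then 1 else 0),
    fun a b => by ring⟩ (M.inc e)

/-- The degree of `v` in the multigraph obtained from `M` by deleting all pendant
edges. -/
noncomputable def degreeNP (M : Multigraph V E) [Fintype E] (v : V) : ℕ :=
  ∑ e : E, if M.IsPendant e then 0 else M.endCount v e

/-- `s` is the edge set of a thread of `M` from `u` to `v`: a nontrivial trail
consisting of non-pendant edges between two vertices of branch degree at least `3`
(in `M` minus its pendant edges) all of whose interior vertices have degree `2`
there. -/
def IsThread (M : Multigraph V E) [Fintype E] (u v : V) (s : Finset E) : Prop :=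
  ∃ p : M.Walk u v, p.IsTrail ∧ p.edges ≠ [] ∧ (∀ e ∈ p.edges, ¬ M.IsPendant e) ∧
    p.edges.toFinset = s ∧ 3 ≤ M.degreeNP u ∧ 3 ≤ M.degreeNP v ∧
    ∀ x ∈ p.interior, M.degreeNP x = 2

/-- `φ, ψ` witness that `K` is the core of `M`: `φ` identifies the vertices of `K`
with the vertices of branch degree at least `3` of `M`, and `ψ` assigns to each
edge of `K` the edge set of a corresponding thread of `M`, these threads
partitioning the non-pendant edges of `M`. -/
def IsCoreWitness (K : Multigraph VK EK) (M : Multigraph V E) [Fintype E]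
    (φ : VK → V) (ψ : EK → Finset E) : Prop :=
  Function.Injective φ ∧
  (∀ x : VK, 3 ≤ M.degreeNP (φ x)) ∧
  (∀ v : V, 3 ≤ M.degreeNP v → ∃ x : VK, φ x = v) ∧
  (∀ c : EK, ∃ x y : VK, K.inc c = s(x, y) ∧ M.IsThread (φ x) (φ y) (ψ c)) ∧
  (∀ e : E, ¬ M.IsPendant e → ∃! c : EK, e ∈ ψ c)

/-- `K` is the core of `M`, obtained by deleting all pendant edges and suppressing
all vertices of degree `2`. -/
def IsCoreOf (K : Multigraph VK EK) (M : Multigraph V E) [Fintype E] : Prop :=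
  ∃ (φ : VK → V) (ψ : EK → Finset E), IsCoreWitness K M φ ψ

end Multigraph


namespace Multigraph

open Finset
open scoped Classical

variable {V E : Type*} {M : Multigraph V E}

namespace Walk

def append : ∀ {u v w : V}, M.Walk u v → M.Walk v w → M.Walk u w
  | _, _, _, .nil _, q => q
  | _, _, _, .cons e h p, q => .cons e h (p.append q)

def reverse : ∀ {u v : V}, M.Walk u v → M.Walk v u
  | _, _, .nil v => .nil v
  | _, _, .cons e h p => p.reverse.append (.cons e (by rw [h, Sym2.eq_swap]) (.nil _))

theorem edges_append : ∀ {u v w : V} (p : M.Walk u v) (q : M.Walk v w),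
    (p.append q).edges = p.edges ++ q.edges
  | _, _, _, .nil _, _ => rfl
  | _, _, _, .cons _ _ p, q => by simp [append, edges, edges_append p q]

theorem edges_reverse : ∀ {u v : V} (p : M.Walk u v), p.reverse.edges = p.edges.reverse
  | _, _, .nil _ => rfl
  | _, _, .cons _ _ p => by simp [reverse, edges_append, edges, edges_reverse p]

theorem start_mem_support_s7 : ∀ {u v : V} (p : M.Walk u v), u ∈ p.support
  | _, _, .nil _ => List.mem_singleton_self _
  | _, _, .cons _ _ _ => List.mem_cons_self ..

theorem mem_support_append_right : ∀ {u v w : V} (p : M.Walk u v) (q : M.Walk v w) {z : V},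
    z ∈ q.support → z ∈ (p.append q).support
  | _, _, _, .nil _, _, _, hz => hz
  | _, _, _, .cons _ _ p, q, _, hz => List.mem_cons_of_mem _ (mem_support_append_right p q hz)

theorem IsTrail.reverse {u v : V} {p : M.Walk u v} (hp : p.IsTrail) : p.reverse.IsTrail := by
  rw [IsTrail, edges_reverse]
  exact List.nodup_reverse.2 hp

theorem exists_lift {VK EK : Type*} {K : Multigraph VK EK} (φ : VK → V) (ψ : EK → Finset E)
    (hψ : ∀ e c c', e ∈ ψ c → e ∈ ψ c' → c = c')
    (hlift : ∀ c x y, K.inc c = s(x, y) →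
      ∃ t : M.Walk (φ x) (φ y), t.IsTrail ∧ ∀ e ∈ t.edges, e ∈ ψ c) :
    ∀ {x y : VK} (p : K.Walk x y), p.IsTrail →
      ∃ q : M.Walk (φ x) (φ y), q.IsTrail ∧ (∀ e ∈ q.edges, ∃ c ∈ p.edges, e ∈ ψ c) ∧
        ∀ z ∈ p.support, φ z ∈ q.support
  | _, _, .nil x, _ => ⟨.nil (φ x), List.nodup_nil, by simp [edges], by simp [support]⟩
  | _, _, .cons c h p, hp => by
      rw [IsTrail, edges, List.nodup_cons] at hp
      obtain ⟨q, hq, hqψ, hqsupp⟩ := exists_lift φ ψ hψ hlift p hp.2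
      obtain ⟨t, ht, htψ⟩ := hlift c _ _ h
      refine ⟨t.append q, ?_, fun e he => ?_, fun z hz => ?_⟩
      · rw [IsTrail, edges_append]
        refine ht.append hq fun e het heq => ?_
        obtain ⟨c', hc', hec'⟩ := hqψ e heq
        exact hp.1 (hψ e c' c hec' (htψ e het) ▸ hc')
      · rw [edges_append, List.mem_append] at he
        rcases he with he | he
        · exact ⟨c, List.mem_cons_self .., htψ e he⟩
        · obtain ⟨c', hc', hec'⟩ := hqψ e he
          exact ⟨c', List.mem_cons_of_mem _ hc', hec'⟩
      · rcases List.mem_cons.1 hz with rfl | hz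
        · exact start_mem_support_s7 _
        · exact mem_support_append_right t q (hqsupp z hz)

end Walk

theorem ReachableOff.invariant {R : Set E} {P : V → Prop}
    (hstep : ∀ g w z, g ∉ R → M.inc g = s(w, z) → P w → P z) {u v : V}
    (h : M.ReachableOff R u v) (hu : P u) : P v := by
  obtain ⟨p, hp⟩ := h
  induction p with
  | nil => exact hu
  | cons g hg p ih =>
    exact ih (hstep g _ _ (hp g List.mem_cons_self) hg hu)
      (fun f hf => hp f (List.mem_cons_of_mem _ hf))

section Core

variable {VK EK : Type*} {K : Multigraph VK EK} [Fintype E] {φ : VK → V} {ψ : EK → Finset E}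

theorem IsCoreWitness.eq_of_mem (h : IsCoreWitness K M φ ψ) {e : E} {c c' : EK}
    (hc : e ∈ ψ c) (hc' : e ∈ ψ c') : c = c' := by
  obtain ⟨x, y, -, p, -, -, hnp, hp, -⟩ := h.2.2.2.1 c
  have hnp : ¬ M.IsPendant e := hnp e (List.mem_toFinset.1 (hp ▸ hc))
  exact (h.2.2.2.2 e hnp).unique hc hc'

theorem IsCoreWitness.exists_trail (h : IsCoreWitness K M φ ψ) {c : EK} {x y : VK}
    (hc : K.inc c = s(x, y)) :
    ∃ t : M.Walk (φ x) (φ y), t.IsTrail ∧ ∀ e ∈ t.edges, e ∈ ψ c := by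
  obtain ⟨x', y', hc', p, hp, -, -, hpψ, -⟩ := h.2.2.2.1 c
  have hmem : ∀ e ∈ p.edges, e ∈ ψ c := fun e he => hpψ ▸ List.mem_toFinset.2 he
  rcases Sym2.eq_iff.1 (hc.symm.trans hc') with ⟨rfl, rfl⟩ | ⟨rfl, rfl⟩
  · exact ⟨p, hp, hmem⟩
  · refine ⟨p.reverse, hp.reverse, fun e he => hmem e ?_⟩
    rwa [Walk.edges_reverse, List.mem_reverse] at he

theorem IsCoreWitness.exists_closed_trail (h : IsCoreWitness K M φ ψ)
    (hK : K.HasSpanningClosedTrail) :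
    ∃ (v : VK) (q : M.Walk (φ v) (φ v)), q.IsTrail ∧ ∀ x, φ x ∈ q.support := by
  obtain ⟨v, p, hp, hspan⟩ := hK
  obtain ⟨q, hq, -, hsupp⟩ :=
    Walk.exists_lift φ ψ (fun _ _ _ => h.eq_of_mem) (fun _ _ _ => h.exists_trail) p hp
  exact ⟨v, q, hq, fun x => hsupp x (hspan x)⟩

end Core

theorem one_le_endCount {v : V} {e : E} (h : v ∈ M.inc e) : 1 ≤ M.endCount v e := by
  obtain ⟨w, hw⟩ := Sym2.mem_iff_exists.1 h
  simp [endCount, hw]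

theorem endCount_eq_zero {v : V} {e : E} (h : v ∉ M.inc e) : M.endCount v e = 0 := by
  simp only [endCount]
  revert h
  induction M.inc e using Sym2.ind with
  | h a b =>
    intro h
    rw [Sym2.mem_iff, not_or] at h
    simp [Ne.symm h.1, Ne.symm h.2]

theorem endCount_le_one {x y : V} {g : E} (hy : y ∈ M.inc g) (hyx : y ≠ x) :
    M.endCount x g ≤ 1 := by
  obtain ⟨w, hw⟩ := Sym2.mem_iff_exists.1 hy
  simp only [endCount, hw, Sym2.lift_mk, if_neg hyx]
  split_ifs <;> simp

variable [Fintype E]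

theorem degreeNP_le_degree (v : V) : M.degreeNP v ≤ M.degree v :=
  sum_le_sum fun e _ => by split_ifs <;> simp [endCount]

theorem eq_of_degree_eq_one {v : V} {g g' : E} (h : M.degree v = 1)
    (hg : v ∈ M.inc g) (hg' : v ∈ M.inc g') : g = g' := by
  by_contra hne
  have : M.endCount v g + M.endCount v g' ≤ M.degree v :=
    calc M.endCount v g + M.endCount v g'
        = ∑ e ∈ {g, g'}, M.endCount v e := (sum_pair hne).symm
      _ ≤ ∑ e, M.endCount v e := sum_le_sum_of_subset (subset_univ _)
  have := one_le_endCount hg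
  have := one_le_endCount hg'
  omega

theorem exists_mem_inc_notMem_of_card_lt_degree {x : V} {R : Finset E}
    (hR : ∀ g ∈ R, M.endCount x g ≤ 1) (hcard : R.card < M.degree x) :
    ∃ f ∉ R, x ∈ M.inc f := by
  by_contra! hcon
  have : M.degree x ≤ R.card :=
    calc M.degree x = ∑ g ∈ R, M.endCount x g :=
          (sum_subset (subset_univ R) fun g _ hg => endCount_eq_zero (hcon g hg)).symm
      _ ≤ ∑ _g ∈ R, 1 := sum_le_sum hR
      _ = R.card := by simp
  omega

noncomputable def npEdgesAt (M : Multigraph V E) (w : V) : Finset E :=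
  univ.filter fun g => ¬ M.IsPendant g ∧ w ∈ M.inc g

theorem card_npEdgesAt_le_degreeNP (w : V) : (M.npEdgesAt w).card ≤ M.degreeNP w :=
  calc (M.npEdgesAt w).card
      = ∑ _g ∈ M.npEdgesAt w, 1 := card_eq_sum_ones _
    _ ≤ ∑ g ∈ M.npEdgesAt w, if M.IsPendant g then 0 else M.endCount w g :=
        sum_le_sum fun g hg => by
          rw [npEdgesAt, mem_filter] at hg
          rw [if_neg hg.2.1]
          exact one_le_endCount hg.2.2
    _ ≤ M.degreeNP w := sum_le_sum_of_subset (subset_univ _)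

theorem npEdgesAt_eq_empty_of_degree_eq_one {w : V} (h : M.degree w = 1) :
    M.npEdgesAt w = ∅ :=
  filter_false_of_mem fun _ _ hg => hg.1 ⟨w, hg.2, h⟩

theorem card_erase_npEdgesAt_union_le_two {e : E} {a b : V} (he : M.inc e = s(a, b))
    (ha : M.degreeNP a ≤ 2) (hb : M.degreeNP b ≤ 2) :
    ((M.npEdgesAt a ∪ M.npEdgesAt b).erase e).card ≤ 2 := by
  have hA := card_npEdgesAt_le_degreeNP (M := M) a
  have hB := card_npEdgesAt_le_degreeNP (M := M) b
  by_cases hpe : M.IsPendant e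
  · obtain ⟨ℓ, hℓ, hℓ1⟩ := hpe
    rw [he, Sym2.mem_iff] at hℓ
    refine card_erase_le.trans ?_
    rcases hℓ with rfl | rfl
    · rw [npEdgesAt_eq_empty_of_degree_eq_one hℓ1, empty_union]; omega
    · rw [npEdgesAt_eq_empty_of_degree_eq_one hℓ1, union_empty]; omega
  · have hea : e ∈ M.npEdgesAt a := mem_filter.2 ⟨mem_univ _, hpe, he ▸ Sym2.mem_mk_left a b⟩
    have heb : e ∈ M.npEdgesAt b := mem_filter.2 ⟨mem_univ _, hpe, he ▸ Sym2.mem_mk_right a b⟩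
    have hinter := card_pos.2 ⟨e, mem_inter.2 ⟨hea, heb⟩⟩
    have hunion := card_union_add_card_inter (M.npEdgesAt a) (M.npEdgesAt b)
    rw [card_erase_of_mem (mem_union_left _ hea)]
    omega

theorem eq_or_isPendant_of_notMem_erase_npEdgesAt_union {e g : E} {a b : V}
    (hg : g ∉ (M.npEdgesAt a ∪ M.npEdgesAt b).erase e) (hab : a ∈ M.inc g ∨ b ∈ M.inc g) :
    g = e ∨ M.IsPendant g := by
  simp only [mem_erase, mem_union, npEdgesAt, mem_filter, mem_univ, true_and] at hg
  tauto

theorem not_reachableOff_erase_npEdgesAt_union {e : E} {a b x : V} (he : M.inc e = s(a, b))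
    (hxa : x ≠ a) (hxb : x ≠ b) (hx : M.degree x ≠ 1) :
    ¬ M.ReachableOff ↑((M.npEdgesAt a ∪ M.npEdgesAt b).erase e) a x := by
  -- Off this cut, `a` only reaches `b` and the leaves hanging at `a` or `b`.
  set P : V → Prop := fun w => w ∈ M.inc e ∨
    (M.degree w = 1 ∧ ∀ g, w ∈ M.inc g → a ∈ M.inc g ∨ b ∈ M.inc g)
  have hstep : ∀ g w z, g ∉ (↑((M.npEdgesAt a ∪ M.npEdgesAt b).erase e) : Set E) →
      M.inc g = s(w, z) → P w → P z := by
    intro g w z hgR hg hw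
    have hwg : w ∈ M.inc g := hg ▸ Sym2.mem_mk_left w z
    have hzg : z ∈ M.inc g := hg ▸ Sym2.mem_mk_right w z
    have hT : a ∈ M.inc g ∨ b ∈ M.inc g := by
      rcases hw with hw | ⟨-, hw⟩
      · rw [he, Sym2.mem_iff] at hw
        rcases hw with rfl | rfl
        exacts [Or.inl hwg, Or.inr hwg]
      · exact hw g hwg
    rcases eq_or_isPendant_of_notMem_erase_npEdgesAt_union hgR hT with rfl | ⟨ℓ, hℓ, hℓ1⟩
    · exact Or.inl hzg
    rw [hg, Sym2.mem_iff] at hℓ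
    rcases hℓ with rfl | rfl
    · left
      by_cases hℓe : ℓ ∈ M.inc e
      · exact eq_of_degree_eq_one hℓ1 hwg hℓe ▸ hzg
      · simp only [he, hg, Sym2.mem_iff] at hℓe hT ⊢
        grind
    · exact Or.inr ⟨hℓ1, fun g' hg' => eq_of_degree_eq_one hℓ1 hzg hg' ▸ hT⟩
  intro hreach
  rcases hreach.invariant hstep (Or.inl (he ▸ Sym2.mem_mk_left a b)) with hxe | ⟨hx1, -⟩
  · rw [he, Sym2.mem_iff] at hxe
    exact hxe.elim hxa hxb
  · exact hx hx1

theorem exists_mem_inc_three_le_degreeNP (hess : M.EssentiallyKEdgeConnected 3) {x : V}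
    (hx : 3 ≤ M.degreeNP x) (e : E) : ∃ w ∈ M.inc e, 3 ≤ M.degreeNP w := by
  obtain ⟨b, he⟩ := Sym2.mem_iff_exists.1 (M.inc e).out_fst_mem
  set a := (M.inc e).out.1
  have hae : a ∈ M.inc e := he ▸ Sym2.mem_mk_left a b
  have hbe : b ∈ M.inc e := he ▸ Sym2.mem_mk_right a b
  by_contra! hlow
  have ha := hlow a hae
  have hb := hlow b hbe
  have hxa : x ≠ a := by rintro rfl; omega
  have hxb : x ≠ b := by rintro rfl; omega
  set R := (M.npEdgesAt a ∪ M.npEdgesAt b).erase e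
  have hR : R.card ≤ 2 := card_erase_npEdgesAt_union_le_two he (by omega) (by omega)
  have hdeg : 3 ≤ M.degree x := hx.trans (degreeNP_le_degree x)
  have hRx : ∀ g ∈ R, M.endCount x g ≤ 1 := by
    intro g hg
    simp only [R, mem_erase, mem_union, npEdgesAt, mem_filter] at hg
    rcases hg.2 with hg | hg
    exacts [endCount_le_one hg.2.2 hxa.symm, endCount_le_one hg.2.2 hxb.symm]
  obtain ⟨f, hfR, hxf⟩ := exists_mem_inc_notMem_of_card_lt_degree hRx (by omega)
  have hcut : M.IsEssentialCut R := ⟨e, f, a, x, by simp [R], hfR, hae, hxf,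
    not_reachableOff_erase_npEdgesAt_union he hxa hxb (by omega)⟩
  have := hess R hcut
  omega

end Multigraph

/-- If the core of an essentially 3-edge-connected multigraph `H` has a spanning
closed trail, then `H` has a dominating closed trail. -/
theorem stmt7 {V E VK EK : Type*} [Fintype E] (M : Multigraph V E)
    (K : Multigraph VK EK) (hess : M.EssentiallyKEdgeConnected 3)
    (hcore : K.IsCoreOf M) (hst : K.HasSpanningClosedTrail) :
    M.HasDominatingClosedTrail := by
  obtain ⟨φ, ψ, hcore⟩ := hcore
  obtain ⟨v, q, hq, hφq⟩ := hcore.exists_closed_trail hst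
  refine ⟨φ v, q, hq, fun e => ?_⟩
  obtain ⟨w, hwe, hw⟩ := Multigraph.exists_mem_inc_three_le_degreeNP hess (hcore.2.1 v) e
  obtain ⟨x, rfl⟩ := hcore.2.2.1 w hw
  exact ⟨φ x, hwe, hφq x⟩
end

section
/- If e is a pendant edge of a multigraph H, then the vertex of L(H) corresponding to e is simplicial in L(H). -/
/-- If `e` is a pendant edge of a multigraph `H`, then the vertex of `L(H)`
corresponding to `e` is simplicial in `L(H)`: its neighborhood induces a complete
graph. -/
theorem stmt15 {V E : Type*} [Fintype E] (M : Multigraph V E) (e : E)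
    (hp : M.IsPendant e) :
    ∀ a b : E, (M.lineGraph).Adj e a → (M.lineGraph).Adj e b → a ≠ b →
      (M.lineGraph).Adj a b := by
  classical
  obtain ⟨v, hve, hdeg⟩ := hp
  set F : E → ℕ := fun f => Sym2.lift ⟨fun a b => (if a = v then 1 else 0) + (if b = v then 1 else 0),
    fun a b => by ring⟩ (M.inc f) with hF
  have hpos : ∀ f : E, v ∈ M.inc f → 1 ≤ F f := by
    intro f hvf
    obtain ⟨w', hw'⟩ : ∃ w', M.inc f = s(v, w') :=
      ⟨Sym2.Mem.other hvf, (Sym2.other_spec hvf).symm⟩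
    simp only [hF, hw', Sym2.lift_mk]
    split_ifs <;> omega
  have nov : ∀ f : E, f ≠ e → v ∉ M.inc f := by
    intro f hfe hvf
    have h2 : F e + F f ≤ ∑ g : E, F g := by
      have : ({e, f} : Finset E).sum F ≤ Finset.univ.sum F :=
        Finset.sum_le_sum_of_subset (Finset.subset_univ _)
      rwa [Finset.sum_pair (Ne.symm hfe)] at this
    have := hpos e hve
    have := hpos f hvf
    have hd : M.degree v = ∑ g : E, F g := rfl
    omega
  -- e is not a loop at v
  have ⟨w, hw⟩ : ∃ w, M.inc e = s(v, w) := ⟨Sym2.Mem.other hve, (Sym2.other_spec hve).symm⟩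
  have hwv : w ≠ v := by
    intro h
    have : F e = 2 := by simp [hF, hw, h]
    have h1 : F e + 0 ≤ ∑ g : E, F g := by
      simpa using Finset.sum_le_sum_of_subset (f := F) (Finset.subset_univ {e})
    have hd : M.degree v = ∑ g : E, F g := rfl
    omega
  intro a b hea heb hab
  have key : ∀ f : E, (M.lineGraph).Adj e f → w ∈ M.inc f := by
    rintro f ⟨hne, x, hx1, hx2⟩
    rw [hw, Sym2.mem_iff] at hx1
    rcases hx1 with h | h
    · exact absurd (h ▸ hx2) (nov f (Ne.symm hne))
    · exact h ▸ hx2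
  exact ⟨hab, w, key a hea, key b heb⟩
end

section
/- If a connected multigraph H has a spanning closed trail and at least 3 edges, then its line graph L(H) is hamiltonian. -/
/-!
Let `C` be a spanning closed trail of `H`. Every edge outside `C` has an endpoint on `C`;
insert each such edge into the edge sequence of `C` right after `C` first reaches one of
its endpoints. In the resulting cyclic sequence, which lists every edge exactly once,
consecutive edges share an endpoint, so it is a hamiltonian cycle of `L(H)` as soon as
there are at least three edges.
-/

theorem List.card_le_length_of_forall_mem {α : Type*} [Fintype α] {L : List α}
    (hall : ∀ a, a ∈ L) : Fintype.card α ≤ L.length := by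
  classical
  exact (Finset.card_le_card fun a _ => List.mem_toFinset.mpr (hall a)).trans L.toFinset_card_le

theorem List.Nodup.ne_of_mem_getLast?_of_mem_head? {α : Type*} {L : List α} (hnd : L.Nodup)
    (hlen : 2 ≤ L.length) {a b : α} (ha : a ∈ L.getLast?) (hb : b ∈ L.head?) : a ≠ b := by
  obtain _ | ⟨x, _ | ⟨y, l⟩⟩ := L <;> grind

namespace SimpleGraph

theorem isHamiltonian_of_isChain_s16 {α : Type*} [Fintype α] [DecidableEq α] {G : SimpleGraph α}
    {L : List α} (hnd : L.Nodup) (hall : ∀ a, a ∈ L) (hcard : 3 ≤ Fintype.card α)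
    (hchain : L.IsChain G.Adj) (hclose : ∀ a ∈ L.getLast?, ∀ b ∈ L.head?, G.Adj a b) :
    G.IsHamiltonian := by
  have hlen := List.card_le_length_of_forall_mem hall
  obtain _ | ⟨x, l⟩ := L
  · simp at hlen; omega
  have hcyc : (x :: (l ++ [x])).IsChain G.Adj :=
    hchain.append (.singleton x) (by simpa using hclose)
  obtain ⟨c, hsupport, hlength⟩ :
      ∃ c : G.Walk x x, c.support = x :: (l ++ [x]) ∧ c.length = l.length + 1 :=
    ⟨(Walk.ofSupport _ (List.cons_ne_nil x _) hcyc).copy List.head_cons (by simp),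
      by rw [Walk.support_copy, Walk.support_ofSupport],
      by rw [Walk.length_copy, Walk.length_ofSupport]; simp⟩
  have hc : ¬ c.Nil := by
    rw [← Walk.length_eq_zero_iff, hlength]; omega
  have htail : c.tail.support = l ++ [x] := by
    rw [Walk.support_tail_of_not_nil _ hc, hsupport, List.tail_cons]
  have hpath : c.tail.IsPath :=
    Walk.IsPath.mk' (htail ▸ (List.perm_append_singleton x l).nodup_iff.mpr hnd)
  intro _
  refine ⟨x, c, Walk.isCycle_iff_isPath_tail_and_le_length.mpr ⟨hpath, ?_⟩,
    hpath.isHamiltonian_of_mem fun a => ?_⟩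
  · rw [hlength]; simp at hlen; omega
  · rw [htail, (List.perm_append_singleton x l).mem_iff]; exact hall a

end SimpleGraph

namespace Multigraph

variable {V E : Type*} {M : Multigraph V E}

def Share (M : Multigraph V E) (e f : E) : Prop := ∃ v, v ∈ M.inc e ∧ v ∈ M.inc f

theorem isChain_share_of_forall_mem {v : V} {l : List E} (h : ∀ e ∈ l, v ∈ M.inc e) :
    l.IsChain M.Share :=
  (List.pairwise_of_forall_mem_list fun a ha b hb => ⟨v, h a ha, h b hb⟩).isChain

theorem isChain_lineGraph_adj {l : List E} (hnd : l.Nodup) (h : l.IsChain M.Share) :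
    l.IsChain M.lineGraph.Adj := by
  induction h with
  | nil => exact .nil
  | singleton a => exact .singleton a
  | cons_cons hab h ih =>
    exact (ih hnd.of_cons).cons_cons
      ⟨fun heq => (List.nodup_cons.mp hnd).1 (heq ▸ List.mem_cons_self), hab⟩

theorem isHamiltonian_lineGraph_of_isChain [Fintype E] [DecidableEq E] {L : List E}
    (hnd : L.Nodup) (hall : ∀ e, e ∈ L) (hcard : 3 ≤ Fintype.card E)
    (hchain : L.IsChain M.Share) (hclose : ∀ a ∈ L.getLast?, ∀ b ∈ L.head?, M.Share a b) :
    M.lineGraph.IsHamiltonian :=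
  SimpleGraph.isHamiltonian_of_isChain_s16 hnd hall hcard (isChain_lineGraph_adj hnd hchain)
    fun a ha b hb => ⟨hnd.ne_of_mem_getLast?_of_mem_head?
      (by have := List.card_le_length_of_forall_mem hall; omega) ha hb, hclose a ha b hb⟩

namespace Walk

def Meets {u w : V} (p : M.Walk u w) (f : E) : Prop := ∃ x ∈ p.support, x ∈ M.inc f

@[simp]
theorem meets_nil {v : V} {f : E} : (Walk.nil v : M.Walk v v).Meets f ↔ v ∈ M.inc f := by
  simp [Meets, support]

@[simp]
theorem meets_cons {u v w : V} {e f : E} {h : M.inc e = s(u, v)} {p : M.Walk v w} :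
    (cons e h p).Meets f ↔ u ∈ M.inc f ∨ p.Meets f := by
  simp [Meets, support]

variable [DecidableEq V]

def weave : ∀ {u w : V}, M.Walk u w → List E → List E
  | _, _, .nil _, S => S
  | u, _, .cons e _ p, S => S.filter (u ∈ M.inc ·) ++ e :: p.weave (S.filter (u ∉ M.inc ·))

theorem weave_perm : ∀ {u w : V} (p : M.Walk u w) (S : List E), (p.weave S).Perm (p.edges ++ S)
  | _, _, .nil _, S => by simp [weave, edges]
  | u, _, .cons e _ p, S => by
    have hS : (S.filter (u ∈ M.inc ·) ++ S.filter (u ∉ M.inc ·)).Perm S := by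
      simpa using List.filter_append_perm (u ∈ M.inc ·) S
    rw [weave, edges]
    refine List.perm_middle.trans (List.Perm.cons e ?_)
    exact ((weave_perm p _).append_left _).trans
      ((List.perm_append_comm_assoc _ _ _).trans (hS.append_left _))

theorem meets_of_mem_filter {u v w : V} {e : E} {h : M.inc e = s(u, v)} {p : M.Walk v w}
    {S : List E} (hS : ∀ f ∈ S, (cons e h p).Meets f) :
    ∀ f ∈ S.filter (u ∉ M.inc ·), p.Meets f := by
  intro f hf
  simp only [List.mem_filter, decide_eq_true_eq] at hf
  simpa [hf.2] using hS f hf.1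

theorem mem_inc_of_mem_head?_weave {u w : V} (p : M.Walk u w) {S : List E}
    (hS : ∀ f ∈ S, p.Meets f) : ∀ f ∈ (p.weave S).head?, u ∈ M.inc f := by
  cases p with
  | nil => simpa [weave] using fun f hf => meets_nil.mp (hS f (List.mem_of_mem_head? hf))
  | cons e h p =>
    intro f hf
    simp only [weave, List.head?_append, List.head?_cons] at hf
    cases hA : (S.filter (u ∈ M.inc ·)).head? with
    | none =>
      rw [hA, Option.none_or, Option.mem_some_iff] at hf
      simp [← hf, h]
    | some g =>
      rw [hA, Option.some_or, Option.mem_some_iff] at hf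
      simpa [← hf] using (List.mem_filter.mp (List.mem_of_mem_head? hA)).2

theorem mem_inc_of_mem_getLast?_weave : ∀ {u w : V} (p : M.Walk u w) {S : List E},
    (∀ f ∈ S, p.Meets f) → ∀ f ∈ (p.weave S).getLast?, w ∈ M.inc f
  | _, _, .nil _, S, hS => fun f hf => meets_nil.mp (hS f (List.mem_of_mem_getLast? hf))
  | u, _, .cons e h (.nil _), S, hS => by
    intro f hf
    rw [weave, List.getLast?_append_cons] at hf
    rcases List.mem_cons.mp (List.mem_of_mem_getLast? hf) with rfl | hf
    · simp [h]
    · exact meets_nil.mp (meets_of_mem_filter hS f hf)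
  | u, _, .cons e h (.cons e' h' p), S, hS => by
    intro f hf
    rw [weave, List.getLast?_append_cons, List.getLast?_cons_of_ne_nil (by simp [weave])] at hf
    exact mem_inc_of_mem_getLast?_weave _ (meets_of_mem_filter hS) f hf

theorem isChain_share_weave : ∀ {u w : V} (p : M.Walk u w) {S : List E},
    (∀ f ∈ S, p.Meets f) → (p.weave S).IsChain M.Share
  | _, _, .nil v, S, hS => isChain_share_of_forall_mem (v := v) fun f hf => meets_nil.mp (hS f hf)
  | u, _, .cons e h p, S, hS => by
    have hS' := meets_of_mem_filter hS
    rw [weave, ← List.singleton_append, ← List.append_assoc]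
    refine List.IsChain.append_overlap (isChain_share_of_forall_mem (v := u) ?_)
      ((isChain_share_weave p hS').cons fun g hg => ⟨_, ?_, mem_inc_of_mem_head?_weave p hS' g hg⟩)
      (List.cons_ne_nil _ _)
    · simp only [List.mem_append, List.mem_filter, decide_eq_true_eq, List.mem_singleton]
      rintro f (⟨-, hf⟩ | rfl)
      exacts [hf, by simp [h]]
    · simp [h]

end Walk

end Multigraph

theorem stmt16_general {V E : Type*} [Fintype E] [DecidableEq E] (M : Multigraph V E)
    (hst : M.HasSpanningClosedTrail)
    (hE : 3 ≤ Fintype.card E) :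
    (M.lineGraph).IsHamiltonian := by
  classical
  obtain ⟨v, p, hp, hspan⟩ := hst
  set S := (Finset.univ \ p.edges.toFinset).toList
  have hS : ∀ f ∈ S, p.Meets f := fun f _ => ⟨_, hspan _, Sym2.out_fst_mem _⟩
  have hperm := p.weave_perm S
  refine M.isHamiltonian_lineGraph_of_isChain ?_ (fun e => ?_) hE (p.isChain_share_weave hS)
    fun a ha b hb => ⟨v, p.mem_inc_of_mem_getLast?_weave hS a ha,
      p.mem_inc_of_mem_head?_weave hS b hb⟩
  · exact hperm.nodup_iff.mpr <| List.nodup_append.mpr ⟨hp, Finset.nodup_toList _,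
      fun a ha b hb hab => by simp_all [S]⟩
  · rw [hperm.mem_iff, List.mem_append]
    simp [S, em]

/-- If a connected multigraph `H` has a spanning closed trail and at least `3`
edges, then its line graph `L(H)` is hamiltonian. -/
theorem stmt16 {V E : Type*} [Fintype E] [DecidableEq E] (M : Multigraph V E)
    (hconn : M.Connected) (hst : M.HasSpanningClosedTrail)
    (hE : 3 ≤ Fintype.card E) :
    (M.lineGraph).IsHamiltonian :=
  stmt16_general M hst hE
end
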